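/- The positive equilibrium ξ+ = 1/(2γ) + (1/2)√(1/γ² + 4(1-v)h/((1-u)rγ)) is strictly decreasing in the treatment facility rate γ > 0. -/
import Mathlib


/-- The positive equilibrium is strictly decreasing in the treatment facility rate `γ > 0`. -/
theorem xiPlus_strictAnti_in_gamma (r h u v : ℝ) (hr : 0 < r) (hh : 0 < h)
    (hu : u ∈ Set.Ico (0 : ℝ) 1) (hv : v ∈ Set.Ico (0 : ℝ) 1) :
    StrictAntiOn
      (fun γ : ℝ => 1 / (2 * γ) +
        1 / 2 * Real.sqrt (1 / γ ^ 2 + 4 * (1 - v) * h / ((1 - u) * r * γ)))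
      (Set.Ioi (0 : ℝ)) := by
  have h1u : 0 < 1 - u := by linarith [hu.2]
  have h1v : 0 < 1 - v := by linarith [hv.2]
  intro x hx y hy hxy
  have hx0 : 0 < x := hx
  have hy0 : 0 < y := hy
  simp only
  have h1 : 1 / (2 * y) < 1 / (2 * x) := by
    apply one_div_lt_one_div_of_lt <;> linarith
  have ha : 0 ≤ 1 / y ^ 2 + 4 * (1 - v) * h / ((1 - u) * r * y) := by positivity
  have hlt : 1 / y ^ 2 + 4 * (1 - v) * h / ((1 - u) * r * y)
      < 1 / x ^ 2 + 4 * (1 - v) * h / ((1 - u) * r * x) := by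
    gcongr
  have hs := Real.sqrt_lt_sqrt ha hlt
  linarith
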